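/- arXiv:1204.1104 — 3 statements merged into one kernel-verified Lean document; each statement's English description precedes it below -/
import Mathlib

section
/- Let A be a complete normed ring, let X, Y ∈ A with ‖X‖ < 1, and fix m ∈ ℕ. Then the family indexed by tuples (k_0, k_1, …, k_m) ∈ ℕ^{m+1} whose member is the product X^{k_0} Y X^{k_1} Y ⋯ Y X^{k_m} (with exactly m factors Y interleaved between the powers of X) is summable, and its sum equals ((1−X)^{-1} Y)^m (1−X)^{-1}. -/
/-!
Expanding `(1 - X)⁻¹ = ∑ₙ Xⁿ` in each of the `m + 1` factors of `((1 - X)⁻¹ Y)^m (1 - X)⁻¹`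
gives the family `X^{k₀} Y ⋯ Y X^{kₘ}`. Splitting off the first index `k₀`, the family for `m + 1`
is the product family of `n ↦ Xⁿ` and `Y` times the family for `m`, so the identity follows by
induction on `m` from the product formula for two absolutely summable series. Only
`HasSum (X ^ ·) (1 - X)⁻¹` and the summability of `‖Xⁿ‖` enter, so the argument works for any
absolutely summable family in place of `n ↦ Xⁿ`.
-/

open Function

section InterleavedProd

variable {R ι : Type*} [NormedRing R]

/-- `interleavedProd f Y m k = f k₀ * Y * f k₁ * Y * ⋯ * Y * f kₘ`. -/
def interleavedProd (f : ι → R) (Y : R) (m : ℕ) (k : Fin (m + 1) → ι) : R :=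
  f (k 0) * (List.ofFn fun i : Fin m => Y * f (k i.succ)).prod

variable (f : ι → R) (Y : R)

@[simp]
lemma interleavedProd_zero_funUnique_symm (n : ι) :
    interleavedProd f Y 0 ((Equiv.funUnique (Fin 1) ι).symm n) = f n := by
  simp [interleavedProd]

@[simp]
lemma interleavedProd_succ_consEquiv (m : ℕ) (p : ι × (Fin (m + 1) → ι)) :
    interleavedProd f Y (m + 1) (Fin.consEquiv (fun _ => ι) p) =
      f p.1 * (Y * interleavedProd f Y m p.2) := by
  simp [interleavedProd, Fin.consEquiv, List.ofFn_succ, mul_assoc]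

variable {f}

lemma summable_norm_mul_left (hf : Summable fun n => ‖f n‖) :
    Summable fun n => ‖Y * f n‖ :=
  .of_nonneg_of_le (fun _ => norm_nonneg _) (fun n => norm_mul_le Y (f n)) (hf.mul_left ‖Y‖)

lemma summable_norm_interleavedProd (hf : Summable fun n => ‖f n‖) (m : ℕ) :
    Summable fun k => ‖interleavedProd f Y m k‖ := by
  induction m with
  | zero =>
    rw [← (Equiv.funUnique (Fin 1) ι).symm.summable_iff]
    simpa only [comp_def, interleavedProd_zero_funUnique_symm] using hf
  | succ m ih =>
    rw [← (Fin.consEquiv fun _ : Fin (m + 2) => ι).summable_iff]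
    simpa only [comp_def, interleavedProd_succ_consEquiv] using
      hf.mul_norm (summable_norm_mul_left Y ih)

theorem hasSum_interleavedProd {a : R} (hf : Summable fun n => ‖f n‖) (ha : HasSum f a)
    (m : ℕ) :
    HasSum (interleavedProd f Y m) ((a * Y) ^ m * a) := by
  induction m with
  | zero =>
    rw [pow_zero, one_mul, ← (Equiv.funUnique (Fin 1) ι).symm.hasSum_iff]
    simpa only [comp_def, interleavedProd_zero_funUnique_symm] using ha
  | succ m ih =>
    have hY : HasSum (fun k => Y * interleavedProd f Y m k) (Y * ((a * Y) ^ m * a)) :=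
      ih.mul_left Y
    rw [← (Fin.consEquiv fun _ : Fin (m + 2) => ι).hasSum_iff, pow_succ', mul_assoc, mul_assoc]
    have hprod := summable_mul_of_summable_norm' hf ha.summable
      (summable_norm_mul_left Y (summable_norm_interleavedProd Y hf m)) hY.summable
    simpa only [comp_def, interleavedProd_succ_consEquiv] using ha.mul hY hprod

end InterleavedProd

/-- Rearrangement identity (2.7)–(2.8): for `‖X‖ < 1` and any `m`, the family
`X^{k₀} Y X^{k₁} Y ⋯ Y X^{kₘ}` indexed by `(k₀,…,kₘ) ∈ ℕ^{m+1}` is summable with sum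
`((1-X)⁻¹ Y)^m (1-X)⁻¹`. -/
theorem interleaved_neumann_sum {A : Type*} [NormedRing A] [CompleteSpace A] (X Y : A)
    (hX : ‖X‖ < 1) (m : ℕ) :
    HasSum
      (fun k : Fin (m + 1) → ℕ =>
        X ^ k 0 * (List.ofFn fun i : Fin m => Y * X ^ k i.succ).prod)
      ((Ring.inverse (1 - X) * Y) ^ m * Ring.inverse (1 - X)) :=
  hasSum_interleavedProd (f := (X ^ ·)) Y (summable_norm_geometric_of_norm_lt_one hX)
    (hasSum_geom_series_inverse X hX) m
end

section
/- Fix d ≥ 1 and let P, Q, R, ζ' be d×d real matrices with ‖R‖ < 1, ‖(I−R)^{-1} Q ζ'‖ < 1, and Q ζ' invertible, and suppose both ζ' and ζ := (I − Q ζ' − R)^{-1} P have all row sums equal to 1 (ζ'·𝟙 = 𝟙 and ζ·𝟙 = 𝟙). Then ∑_{m=1}^∞ m · ((I−R)^{-1} Q ζ')^m (I−R)^{-1} P 𝟙 = (I − Q ζ' − R)^{-1} Q 𝟙. -/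
/-!
With `B = (I - R)⁻¹ Q ζ'` one has `I - Q ζ' - R = (I - R)(I - B)`. The condition `ζ 𝟙 = 𝟙` then
says `(I - R)⁻¹ P 𝟙 = (I - B) 𝟙`, and `ζ' 𝟙 = 𝟙` gives `Q 𝟙 = Q ζ' 𝟙`, so the claim becomes
`∑ m Bᵐ (I - B) 𝟙 = (I - B)⁻¹ B 𝟙`, the derivative of the geometric series times `I - B`.
-/

open Matrix

attribute [local instance] Matrix.linftyOpNormedRing

-- Completeness of the operator norm, hence `HasSummableGeomSeries`, comes from finite dimension.
attribute [local instance] Matrix.linftyOpNormedSpace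

open scoped Ring

theorem hasSum_nsmul_pow_mul_one_sub {A : Type*} [NormedRing A] [HasSummableGeomSeries A]
    {x : A} (h : ‖x‖ < 1) :
    HasSum (fun n : ℕ => n • (x ^ n * (1 - x))) ((1 - x)⁻¹ʳ * x) := by
  have hu : IsUnit (1 - x) := isUnit_one_sub_of_norm_lt_one h
  have hl : (1 - x)⁻¹ʳ * (1 - x) = 1 := Ring.inverse_mul_cancel _ hu
  have hr : (1 - x) * (1 - x)⁻¹ʳ = 1 := Ring.mul_inverse_cancel _ hu
  have hlimit : x * ((1 - x)⁻¹ʳ ^ 2 * (1 - x)) = (1 - x)⁻¹ʳ * x :=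
    calc x * ((1 - x)⁻¹ʳ ^ 2 * (1 - x)) = (1 - x)⁻¹ʳ * (1 - x) * x * (1 - x)⁻¹ʳ := by
          rw [hl, one_mul, sq, mul_assoc, hl, mul_one]
      _ = (1 - x)⁻¹ʳ * x * ((1 - x) * (1 - x)⁻¹ʳ) := by noncomm_ring
      _ = (1 - x)⁻¹ʳ * x := by rw [hr, mul_one]
  have hsum := (hasSum_coe_mul_geometric_of_norm_lt_one' h).mul_right (1 - x)
  simpa only [mul_assoc, ← nsmul_eq_mul, smul_mul_assoc, hlimit] using hsum

theorem HasSum.matrix_mulVec {X m n R : Type*} [Fintype n] [NonUnitalNonAssocSemiring R]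
    [TopologicalSpace R] [IsTopologicalSemiring R] {f : X → Matrix m n R} {a : Matrix m n R}
    (hf : HasSum f a) (v : n → R) : HasSum (fun x => f x *ᵥ v) (a *ᵥ v) :=
  hf.map (mulVec.addMonoidHomLeft v) (continuous_id.matrix_mulVec continuous_const)

theorem conditional_mean_U_general (d : ℕ) (P Q R ζ' : Matrix (Fin d) (Fin d) ℝ)
    (hR : ‖R‖ < 1) (hQζ : ‖(1 - R)⁻¹ * (Q * ζ')‖ < 1)
    (hζ' : ζ' *ᵥ (1 : Fin d → ℝ) = 1)
    (hζ : ((1 - Q * ζ' - R)⁻¹ * P) *ᵥ (1 : Fin d → ℝ) = 1) :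
    HasSum
      (fun m : ℕ =>
        m • ((((1 - R)⁻¹ * (Q * ζ')) ^ m * (1 - R)⁻¹ * P) *ᵥ (1 : Fin d → ℝ)))
      (((1 - Q * ζ' - R)⁻¹ * Q) *ᵥ (1 : Fin d → ℝ)) := by
  set B := (1 - R)⁻¹ * (Q * ζ')
  have hRinv : (1 - R) * (1 - R)⁻¹ = 1 :=
    mul_nonsing_inv _ ((isUnit_iff_isUnit_det _).mp (isUnit_one_sub_of_norm_lt_one hR))
  have hBinv : (1 - B) * (1 - B)⁻¹ = 1 :=
    mul_nonsing_inv _ ((isUnit_iff_isUnit_det _).mp (isUnit_one_sub_of_norm_lt_one hQζ))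
  have hfactor : (1 - Q * ζ' - R)⁻¹ = (1 - B)⁻¹ * (1 - R)⁻¹ := by
    rw [← Matrix.mul_inv_rev, mul_sub, mul_one, ← mul_assoc, hRinv, one_mul, sub_right_comm]
  have hP : ((1 - R)⁻¹ * P) *ᵥ 1 = (1 - B) *ᵥ (1 : Fin d → ℝ) := by
    calc ((1 - R)⁻¹ * P) *ᵥ 1
        = (1 - B) *ᵥ (((1 - B)⁻¹ * (1 - R)⁻¹ * P) *ᵥ (1 : Fin d → ℝ)) := by
          rw [mulVec_mulVec, ← mul_assoc, ← mul_assoc, hBinv, one_mul]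
      _ = (1 - B) *ᵥ 1 := by rw [← hfactor, hζ]
  have hQ : ((1 - Q * ζ' - R)⁻¹ * Q) *ᵥ 1 = ((1 - B)⁻¹ * B) *ᵥ (1 : Fin d → ℝ) := by
    simp only [hfactor, B, ← mulVec_mulVec, hζ']
  rw [hQ, nonsing_inv_eq_ringInverse (1 - B)]
  convert (hasSum_nsmul_pow_mul_one_sub hQζ).matrix_mulVec 1 using 2 with m
  rw [smul_mulVec, mul_assoc, ← mulVec_mulVec, hP, mulVec_mulVec]

/-- Formula (2.17): the conditional expectation of `|U_n|` equals `A_n 𝟙`, i.e.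
`∑_{m=1}^∞ m ((I-R)⁻¹ Q ζ')^m (I-R)⁻¹ P 𝟙 = (I - Q ζ' - R)⁻¹ Q 𝟙`. -/
theorem conditional_mean_U (d : ℕ) (hd : 1 ≤ d) (P Q R ζ' : Matrix (Fin d) (Fin d) ℝ)
    (hR : ‖R‖ < 1) (hQζ : ‖(1 - R)⁻¹ * (Q * ζ')‖ < 1) (hQ : IsUnit (Q * ζ'))
    (hζ' : ζ' *ᵥ (1 : Fin d → ℝ) = 1)
    (hζ : ((1 - Q * ζ' - R)⁻¹ * P) *ᵥ (1 : Fin d → ℝ) = 1) :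
    HasSum
      (fun m : ℕ =>
        m • ((((1 - R)⁻¹ * (Q * ζ')) ^ m * (1 - R)⁻¹ * P) *ᵥ (1 : Fin d → ℝ)))
      (((1 - Q * ζ' - R)⁻¹ * Q) *ᵥ (1 : Fin d → ℝ)) :=
  conditional_mean_U_general d P Q R ζ' hR hQζ hζ' hζ
end

section
/- Let ξ : ℕ → ℤ satisfy ξ(0) = 0 and |ξ(k+1) − ξ(k)| ≤ 1 for all k, and suppose there exists k with ξ(k) = 1; let T = min{k : ξ(k) = 1}. For n ∈ ℤ set U_n = #{k < T : ξ(k) = n, ξ(k+1) = n−1} (down-steps from level n before T) and Z_n = #{k < T : ξ(k) = n, ξ(k+1) = n} (lateral steps at level n before T). Then T = 1 + ∑_{n ≤ 0} (2·U_n + Z_n), where the sum over nonpositive integers n has only finitely many nonzero terms. -/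
/-!
Weight each step of the path by `1 - (ξ (k + 1) - ξ k)`, i.e. `2` for a down-step, `1` for a
lateral step and `0` for an up-step. The weights telescope, so the weights of the first `T` steps
add up to `T - (ξ T - ξ 0) = T - 1`. Since the path stays at nonpositive levels before `T`,
regrouping these weights by the level the step starts from gives `∑_{n ≤ 0} (2 U_n + Z_n)`.
-/

open Finset Function

theorem Finset.support_sum_fiberwise_subset_image {α β M : Type*} [DecidableEq β]
    [AddCommMonoid M] (s : Finset α) (g : α → β) (w : α → M) :
    support (fun b => ∑ k ∈ s with g k = b, w k) ⊆ s.image g := by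
  intro b hb
  obtain ⟨k, hk, -⟩ := exists_ne_zero_of_sum_ne_zero hb
  obtain ⟨hks, rfl⟩ := mem_filter.mp hk
  exact mem_image_of_mem g hks

theorem finsum_mem_sum_fiberwise {α β M : Type*} [DecidableEq β] [AddCommMonoid M]
    {s : Finset α} {g : α → β} {A : Set β} (hA : ∀ k ∈ s, g k ∈ A) (w : α → M) :
    ∑ᶠ b ∈ A, ∑ k ∈ s with g k = b, w k = ∑ k ∈ s, w k := by
  rw [finsum_mem_eq_sum_of_subset _ (t := s.image g)
    (Set.inter_subset_right.trans (s.support_sum_fiberwise_subset_image g w))]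
  · exact sum_fiberwise_of_maps_to (fun k hk => mem_image_of_mem g hk) w
  · simpa [Set.subset_def] using hA

theorem le_of_lt_of_forall_lt_ne_add_one {ξ : ℕ → ℤ} {a : ℤ} {T : ℕ} (h0 : ξ 0 ≤ a)
    (hup : ∀ k, ξ (k + 1) - ξ k ≤ 1) (hne : ∀ k < T, ξ k ≠ a + 1) :
    ∀ k < T, ξ k ≤ a := by
  intro k hk
  induction k with
  | zero => exact h0
  | succ k ih =>
    have := ih (by omega)
    have := hup k
    have := hne (k + 1) hk
    omega

section StepWeight

variable {ξ : ℕ → ℤ}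

def stepWeight (ξ : ℕ → ℤ) (k : ℕ) : ℕ :=
  2 * (if ξ (k + 1) = ξ k - 1 then 1 else 0) + (if ξ (k + 1) = ξ k then 1 else 0)

theorem stepWeight_add_succ {k : ℕ} (hk : |ξ (k + 1) - ξ k| ≤ 1) :
    (stepWeight ξ k : ℤ) + ξ (k + 1) = ξ k + 1 := by
  have := abs_le.mp hk
  unfold stepWeight
  split_ifs <;> push_cast <;> omega

theorem sum_range_stepWeight_add (hstep : ∀ k, |ξ (k + 1) - ξ k| ≤ 1) (T : ℕ) :
    ((∑ k ∈ range T, stepWeight ξ k : ℕ) : ℤ) + ξ T = ξ 0 + T := by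
  induction T with
  | zero => simp
  | succ T ih =>
    have := stepWeight_add_succ (hstep T)
    push_cast [sum_range_succ] at ih ⊢
    omega

theorem two_mul_card_down_add_card_lateral (s : Finset ℕ) (n : ℤ) :
    2 * #{k ∈ s | ξ k = n ∧ ξ (k + 1) = n - 1} + #{k ∈ s | ξ k = n ∧ ξ (k + 1) = n} =
      ∑ k ∈ s with ξ k = n, stepWeight ξ k := by
  simp only [card_filter, sum_filter, mul_sum, ← sum_add_distrib]
  refine sum_congr rfl fun k _ => ?_
  unfold stepWeight
  split_ifs <;> omega

end StepWeight

/-- The pathwise content of Theorem 1.1(2): the first hitting time `T` of level `1` satisfies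
`T = 1 + ∑_{n ≤ 0} (2 U_n + Z_n)`, with only finitely many nonzero terms, where `U_n` counts
down-steps from level `n` before `T` and `Z_n` counts lateral steps at level `n` before `T`. -/
theorem hitting_time_branching_decomposition (ξ : ℕ → ℤ) (h0 : ξ 0 = 0)
    (hstep : ∀ k, |ξ (k + 1) - ξ k| ≤ 1) (hex : ∃ k, ξ k = 1) (U Z : ℤ → ℕ)
    (hU : ∀ n : ℤ, U n =
      ((Finset.range (Nat.find hex)).filter fun k => ξ k = n ∧ ξ (k + 1) = n - 1).card)
    (hZ : ∀ n : ℤ, Z n =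
      ((Finset.range (Nat.find hex)).filter fun k => ξ k = n ∧ ξ (k + 1) = n).card) :
    {n : ℤ | n ≤ 0 ∧ 2 * U n + Z n ≠ 0}.Finite ∧
      Nat.find hex = 1 + ∑ᶠ (n : ℤ) (_ : n ≤ 0), (2 * U n + Z n) := by
  set T := Nat.find hex
  have hlevel (n : ℤ) : 2 * U n + Z n = ∑ k ∈ range T with ξ k = n, stepWeight ξ k := by
    rw [hU, hZ, two_mul_card_down_add_card_lateral]
  have hnonpos : ∀ k ∈ range T, ξ k ≤ 0 := fun k hk =>
    le_of_lt_of_forall_lt_ne_add_one h0.le (fun k => (abs_le.mp (hstep k)).2)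
      (fun k hk => Nat.find_min hex hk) k (mem_range.mp hk)
  simp only [hlevel]
  refine ⟨(Finset.finite_toSet _).subset fun n hn =>
    (range T).support_sum_fiberwise_subset_image ξ _ hn.2, ?_⟩
  have hsum := finsum_mem_sum_fiberwise (g := ξ) (A := {n | n ≤ 0}) hnonpos (stepWeight ξ)
  simp only [Set.mem_ofPred_eq] at hsum
  rw [hsum]
  have htel := sum_range_stepWeight_add hstep T
  rw [h0, Nat.find_spec hex] at htel
  omega
end
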